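/- Let W be a Coxeter group with Bruhat order, s a simple reflection, and y, w ∈ W. If ys > y, w ≤ ys and w ∉ {y, ys}, then there is no z ∈ W with y ≤ z and zs ≤ w. -/

import Mathlib

open CoxeterSystem

variable {B : Type*} {W : Type*} [Group W] {M : CoxeterMatrix B}

/-- One step in the Bruhat order: multiply on the right by a reflection, increasing length. -/
def BruhatStep (cs : CoxeterSystem M W) (u v : W) : Prop :=
  ∃ t : W, cs.IsReflection t ∧ v = u * t ∧ cs.length u < cs.length v

/-- The Bruhat order on a Coxeter group. -/
def BruhatLE (cs : CoxeterSystem M W) : W → W → Prop :=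
  Relation.ReflTransGen (BruhatStep cs)

/-- The strict Bruhat order. -/
def BruhatLT (cs : CoxeterSystem M W) (u v : W) : Prop :=
  BruhatLE cs u v ∧ u ≠ v

set_option linter.unusedSectionVars false

namespace BruhatNoZ

abbrev Par := Multiplicative (ZMod 2)

lemma par_sq (a : Par) : a * a = 1 := by revert a; decide

lemma par_cases (a : Par) : a = 1 ∨ a = Multiplicative.ofAdd 1 := by revert a; decide

lemma par_ne : (Multiplicative.ofAdd (1 : ZMod 2)) ≠ 1 := by decide

open Classical in
noncomputable def ind (u : W) : W → Par :=
  fun t => if t = u then Multiplicative.ofAdd 1 else 1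

lemma ind_self (u : W) : ind u u = Multiplicative.ofAdd 1 := if_pos rfl

lemma ind_of_ne {u t : W} (h : t ≠ u) : ind u t = 1 := if_neg h

def conjAct (w : W) : (W → Par) ≃* (W → Par) where
  toFun ψ := fun t => ψ (w⁻¹ * t * w)
  invFun ψ := fun t => ψ (w * t * w⁻¹)
  left_inv ψ := funext fun t => congrArg ψ (by group)
  right_inv ψ := funext fun t => congrArg ψ (by group)
  map_mul' ψ χ := rfl

def phi : W →* MulAut (W → Par) where
  toFun := conjAct
  map_one' := MulEquiv.ext fun ψ => funext fun t => congrArg ψ (by group)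
  map_mul' u v := MulEquiv.ext fun ψ => funext fun t => congrArg ψ (by group)

lemma phi_apply (w : W) (ψ : W → Par) (t : W) : phi w ψ t = ψ (w⁻¹ * t * w) := rfl

lemma phi_ind (w u : W) : phi w (ind u) = ind (w * u * w⁻¹) := by
  funext t
  show ind u (w⁻¹ * t * w) = ind (w * u * w⁻¹) t
  by_cases h : t = w * u * w⁻¹
  · subst h
    have h2 : w⁻¹ * (w * u * w⁻¹) * w = u := by group
    rw [h2, ind_self, ind_self]
  · rw [ind_of_ne, ind_of_ne h]
    intro hc
    exact h (by rw [← hc]; group)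


lemma mk_pow (n : W → Par) (g : W) (m : ℕ) :
    (⟨n, g⟩ : (W → Par) ⋊[phi] W) ^ m =
      ⟨∏ k ∈ Finset.range m, phi (g ^ k) n, g ^ m⟩ := by
  induction m with
  | zero =>
    refine SemidirectProduct.ext ?_ ?_ <;> simp
  | succ m ih =>
    rw [pow_succ', ih]
    rw [SemidirectProduct.mul_def]
    refine SemidirectProduct.ext ?_ ?_
    · show n * phi g (∏ k ∈ Finset.range m, phi (g ^ k) n)
          = ∏ k ∈ Finset.range (m + 1), phi (g ^ k) n
      rw [map_prod, Finset.prod_range_succ']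
      simp only [pow_zero, map_one, MulAut.one_apply]
      rw [mul_comm]
      congr 1
      apply Finset.prod_congr rfl
      intro k _
      rw [← MulAut.mul_apply, ← map_mul, ← pow_succ']
    · show g * g ^ m = g ^ (m + 1)
      rw [pow_succ']

lemma prod_pair {α : Type*} [CommMonoid α] (h : ℕ → α) (m : ℕ) :
    ∏ k ∈ Finset.range m, (h (2 * k) * h (2 * k + 1)) = ∏ j ∈ Finset.range (2 * m), h j := by
  induction m with
  | zero => simp
  | succ m ih =>
    have h2 : 2 * (m + 1) = (2 * m + 1) + 1 := by ring
    rw [Finset.prod_range_succ, ih, h2, Finset.prod_range_succ, Finset.prod_range_succ,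
      mul_assoc]

lemma isLiftable (cs : CoxeterSystem M W) :
    M.IsLiftable (fun i => (⟨ind (cs.simple i), cs.simple i⟩ : (W → Par) ⋊[phi] W)) := by
  intro i j
  set si := cs.simple i with hsi_def
  set sj := cs.simple j with hsj_def
  set p := si * sj with hp
  set m := M i j with hm
  have hpm : p ^ m = 1 := cs.simple_mul_simple_pow i j
  have hsi : si⁻¹ = si := cs.inv_simple i
  have hsj : sj⁻¹ = sj := cs.inv_simple j
  have hflip : si * p⁻¹ = p * si := by
    rw [hp, mul_inv_rev, hsi, hsj]
    group
  have key : ∀ k : ℕ, si * (p⁻¹) ^ k = p ^ k * si := by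
    intro k
    induction k with
    | zero => simp
    | succ k ih =>
      rw [pow_succ', pow_succ', ← mul_assoc, hflip, mul_assoc, ih, ← mul_assoc]
  have conj_a : ∀ k : ℕ, p ^ k * si * (p ^ k)⁻¹ = p ^ (2 * k) * si := by
    intro k
    rw [← inv_pow, mul_assoc, key, ← mul_assoc, ← pow_add, two_mul]
  have conj_b : ∀ k : ℕ, p ^ k * (si * sj * si) * (p ^ k)⁻¹ = p ^ (2 * k + 1) * si := by
    intro k
    have hsss : si * sj * si = p * si := by rw [hp]
    rw [hsss, ← inv_pow, mul_assoc, mul_assoc, key, ← mul_assoc, ← mul_assoc, ← pow_succ,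
      ← pow_add]
    congr 2
    omega
  have hmul : (⟨ind si, si⟩ : (W → Par) ⋊[phi] W) * ⟨ind sj, sj⟩
      = ⟨ind si * ind (si * sj * si), p⟩ := by
    rw [SemidirectProduct.mul_def]
    refine SemidirectProduct.ext ?_ rfl
    show ind si * phi si (ind sj) = ind si * ind (si * sj * si)
    rw [phi_ind, hsi]
  show ((⟨ind si, si⟩ : (W → Par) ⋊[phi] W) * ⟨ind sj, sj⟩) ^ m = 1
  rw [hmul, mk_pow]
  refine SemidirectProduct.ext ?_ hpm
  show (∏ k ∈ Finset.range m, phi (p ^ k) (ind si * ind (si * sj * si))) = 1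
  have step : ∀ k ∈ Finset.range m, phi (p ^ k) (ind si * ind (si * sj * si))
      = ind (p ^ (2 * k) * si) * ind (p ^ (2 * k + 1) * si) := by
    intro k _
    rw [map_mul, phi_ind, phi_ind, conj_a k, conj_b k]
  rw [Finset.prod_congr rfl step, prod_pair (fun j => ind (p ^ j * si)), two_mul,
    Finset.prod_range_add]
  have e : ∀ k, ind (p ^ (m + k) * si) = ind (p ^ k * si) := by
    intro k; rw [pow_add, hpm, one_mul]
  rw [Finset.prod_congr rfl (fun k _ => e k)]
  exact funext fun t => par_sq _


noncomputable def theHom (cs : CoxeterSystem M W) : W →* (W → Par) ⋊[phi] W :=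
  cs.lift ⟨fun i => ⟨ind (cs.simple i), cs.simple i⟩, isLiftable cs⟩

lemma theHom_simple (cs : CoxeterSystem M W) (i : B) :
    theHom cs (cs.simple i) = ⟨ind (cs.simple i), cs.simple i⟩ :=
  cs.lift_apply_simple _ i

lemma theHom_right (cs : CoxeterSystem M W) (w : W) : (theHom cs w).right = w := by
  have h : SemidirectProduct.rightHom.comp (theHom cs) = MonoidHom.id W := by
    apply cs.ext_simple
    intro i
    rw [MonoidHom.comp_apply, theHom_simple, MonoidHom.id_apply]
    rfl
  exact DFunLike.congr_fun h w

noncomputable def nn (cs : CoxeterSystem M W) (w t : W) : Par := (theHom cs w).left t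

lemma nn_mul (cs : CoxeterSystem M W) (u v t : W) :
    nn cs (u * v) t = nn cs u t * nn cs v (u⁻¹ * t * u) := by
  unfold nn
  rw [map_mul, SemidirectProduct.mul_left, theHom_right]
  rfl

lemma nn_one (cs : CoxeterSystem M W) (t : W) : nn cs 1 t = 1 := by
  unfold nn
  rw [map_one]
  rfl

lemma nn_simple (cs : CoxeterSystem M W) (i : B) (t : W) :
    nn cs (cs.simple i) t = ind (cs.simple i) t := by
  unfold nn
  rw [theHom_simple]

lemma nn_inv (cs : CoxeterSystem M W) (u t : W) :
    nn cs u⁻¹ t = nn cs u (u * t * u⁻¹) := by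
  have h := nn_mul cs u u⁻¹ (u * t * u⁻¹)
  rw [mul_inv_cancel, nn_one] at h
  have e : u⁻¹ * (u * t * u⁻¹) * u = t := by group
  rw [e] at h
  rcases par_cases (nn cs u (u * t * u⁻¹)) with h1 | h1 <;>
    rcases par_cases (nn cs u⁻¹ t) with h2 | h2 <;>
    rw [h1, h2] at h ⊢ <;> simp_all


lemma ind_conj (w u t : W) : ind (w * u * w⁻¹) t = ind u (w⁻¹ * t * w) := by
  rw [← phi_ind]
  rfl

lemma nn_wordProd (cs : CoxeterSystem M W) (ω : List B) (t : W) :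
    nn cs (cs.wordProd ω) t = ((cs.leftInvSeq ω).map (fun u => ind u t)).prod := by
  induction ω generalizing t with
  | nil => simp [nn_one]
  | cons i ω ih =>
    rw [wordProd_cons, nn_mul, nn_simple]
    have hlis : cs.leftInvSeq (i :: ω)
        = cs.simple i :: (cs.leftInvSeq ω).map (MulAut.conj (cs.simple i)) := rfl
    rw [hlis, List.map_cons, List.prod_cons, List.map_map]
    congr 1
    rw [ih]
    congr 1
    apply List.map_congr_left
    intro u _
    show ind u ((cs.simple i)⁻¹ * t * cs.simple i) = ind (MulAut.conj (cs.simple i) u) t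
    rw [MulAut.conj_apply]
    exact (ind_conj (cs.simple i) u t).symm

lemma prod_ind_of_not_mem {l : List W} {t : W} (h : t ∉ l) :
    (l.map (fun u => ind u t)).prod = 1 := by
  induction l with
  | nil => rfl
  | cons u l ih =>
    have hne : t ≠ u := by
      intro he; subst he; exact h List.mem_cons_self
    rw [List.map_cons, List.prod_cons, ind_of_ne hne, one_mul]
    exact ih (fun hm => h (List.mem_cons_of_mem u hm))

lemma prod_ind_of_mem {l : List W} {t : W} (hn : l.Nodup) (h : t ∈ l) :
    (l.map (fun u => ind u t)).prod = Multiplicative.ofAdd 1 := by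
  induction l with
  | nil => simp at h
  | cons u l ih =>
    rw [List.map_cons, List.prod_cons]
    rcases List.mem_cons.mp h with rfl | hm
    · rw [ind_self, prod_ind_of_not_mem (List.nodup_cons.mp hn).1, mul_one]
    · have hne : t ≠ u := fun he => (List.nodup_cons.mp hn).1 (he ▸ hm)
      rw [ind_of_ne hne, one_mul]
      exact ih (List.nodup_cons.mp hn).2 hm


lemma nn_refl_self (cs : CoxeterSystem M W) {t : W} (ht : cs.IsReflection t) :
    nn cs t t = Multiplicative.ofAdd 1 := by
  obtain ⟨u, i, rfl⟩ := ht
  have h1 : u * cs.simple i * u⁻¹ = u * (cs.simple i * u⁻¹) := by group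
  rw [h1, nn_mul]
  have e1 : u⁻¹ * (u * (cs.simple i * u⁻¹)) * u = cs.simple i := by group
  rw [e1, nn_mul, nn_simple, ind_self]
  have e2 : (cs.simple i)⁻¹ * cs.simple i * cs.simple i = cs.simple i := by group
  rw [e2, nn_inv, h1, mul_left_comm, par_sq, mul_one]

lemma nn_of_not_inversion (cs : CoxeterSystem M W) {v t : W} (ht : cs.IsReflection t)
    (hv : ¬ cs.length (t * v) < cs.length v) : nn cs v t = 1 := by
  rcases par_cases (nn cs v t) with h | h
  · exact h
  · exfalso
    obtain ⟨ω, hred, hw⟩ := cs.exists_reduced_word' v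
    have hmem : t ∈ cs.leftInvSeq ω := by
      by_contra hnm
      rw [hw, nn_wordProd, prod_ind_of_not_mem hnm] at h
      exact par_ne h.symm
    have := cs.isLeftInversion_of_mem_leftInvSeq hred hmem
    rw [← hw] at this
    exact hv this.2

lemma nn_of_inversion (cs : CoxeterSystem M W) {w t : W} (ht : cs.IsReflection t)
    (hlt : cs.length (t * w) < cs.length w) : nn cs w t = Multiplicative.ofAdd 1 := by
  have hw : w = t * (t * w) := by rw [← mul_assoc, ht.mul_self, one_mul]
  rw [hw, nn_mul]
  have e : t⁻¹ * t * t = t := by group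
  rw [e, nn_refl_self cs ht]
  have h2 : nn cs (t * w) t = 1 := by
    apply nn_of_not_inversion cs ht
    rw [← mul_assoc, ht.mul_self, one_mul]
    omega
  rw [h2, mul_one]

lemma mem_leftInvSeq_of_inversion (cs : CoxeterSystem M W) {w t : W} (ht : cs.IsReflection t)
    (hlt : cs.length (t * w) < cs.length w) {ω : List B} (hred : cs.IsReduced ω) (hw : w = cs.wordProd ω) :
    t ∈ cs.leftInvSeq ω := by
  by_contra hnm
  have h := nn_of_inversion cs ht hlt
  rw [hw, nn_wordProd, prod_ind_of_not_mem hnm] at h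
  exact par_ne h.symm

lemma mem_rightInvSeq_of_inversion (cs : CoxeterSystem M W) {w t : W} (ht : cs.IsReflection t)
    (hlt : cs.length (w * t) < cs.length w) {ω : List B} (hred : cs.IsReduced ω) (hw : w = cs.wordProd ω) :
    t ∈ cs.rightInvSeq ω := by
  have h1 : cs.length (t * w⁻¹) < cs.length w⁻¹ := by
    have : t * w⁻¹ = (w * t)⁻¹ := by rw [mul_inv_rev, ht.inv]
    rw [this, cs.length_inv, cs.length_inv]
    exact hlt
  have h2 : w⁻¹ = cs.wordProd ω.reverse := by rw [cs.wordProd_reverse, hw]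
  have h3 : cs.IsReduced ω.reverse := (cs.isReduced_reverse_iff ω).mpr hred
  have h4 := mem_leftInvSeq_of_inversion cs ht h1 h3 h2
  rw [cs.leftInvSeq_reverse] at h4
  exact List.mem_reverse.mp h4


lemma length_le_of_le {cs : CoxeterSystem M W} {u v : W} (h : BruhatLE cs u v) :
    cs.length u ≤ cs.length v := by
  induction h with
  | refl => exact le_refl _
  | tail _ hstep ih =>
    obtain ⟨t, _, _, hlt⟩ := hstep
    omega

lemma eq_of_le_of_length_ge {cs : CoxeterSystem M W} {u v : W} (h : BruhatLE cs u v)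
    (hl : cs.length v ≤ cs.length u) : u = v := by
  rcases Relation.ReflTransGen.cases_head h with rfl | ⟨c, hc, hcv⟩
  · rfl
  · obtain ⟨t, _, _, hlt⟩ := hc
    have := length_le_of_le hcv
    omega

lemma step_of_le_of_length {cs : CoxeterSystem M W} {u v : W} (h : BruhatLE cs u v)
    (hl : cs.length v = cs.length u + 1) :
    ∃ t : W, cs.IsReflection t ∧ v = u * t := by
  rcases Relation.ReflTransGen.cases_head h with rfl | ⟨c, hc, hcv⟩
  · omega
  · obtain ⟨t, ht, hct, hlt⟩ := hc
    have h1 := length_le_of_le hcv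
    have h2 : c = v := eq_of_le_of_length_ge hcv (by omega)
    exact ⟨t, ht, by rw [← h2, hct]⟩

/-- The one-step lifting lemma: if `y * t` is a Bruhat step up from `y`,
`s i` is a right descent of `y * t`, and `s i` is a right ascent of `y`, then `t = s i`. -/
lemma step_lifting (cs : CoxeterSystem M W) (i : B) {y t : W} (ht : cs.IsReflection t)
    (h1 : cs.length (y * t) = cs.length y + 1)
    (h2 : cs.length (y * t * cs.simple i) < cs.length (y * t))
    (h3 : cs.length y < cs.length (y * cs.simple i)) : t = cs.simple i := by
  set z := y * t with hz
  obtain ⟨ω', hred', hw'⟩ := cs.exists_reduced_word' (z * cs.simple i)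
  have hωlen : ω'.length = cs.length (z * cs.simple i) := by
    have h0 := hred'
    unfold CoxeterSystem.IsReduced at h0
    rw [← hw'] at h0
    exact h0.symm
  have hπ : cs.wordProd (ω' ++ [i]) = z := by
    rw [cs.wordProd_append, cs.wordProd_singleton, ← hw',
      cs.simple_mul_simple_cancel_right]
  have hlen1 : cs.length (z * cs.simple i) + 1 = cs.length z := by
    rcases cs.length_mul_simple z i with hc | hc
    · omega
    · exact hc
  have hred : cs.IsReduced (ω' ++ [i]) := by
    unfold CoxeterSystem.IsReduced
    rw [hπ, List.length_append, List.length_singleton]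
    omega
  have hzt : cs.length (z * t) < cs.length z := by
    have : z * t = y := by rw [hz, mul_assoc, ht.mul_self, mul_one]
    rw [this]
    omega
  have hmem : t ∈ cs.rightInvSeq (ω' ++ [i]) :=
    mem_rightInvSeq_of_inversion cs ht hzt hred hπ.symm
  obtain ⟨j, hj, hgt⟩ := List.mem_iff_getElem.mp hmem
  have hj' : j < ω'.length + 1 := by
    rw [cs.length_rightInvSeq, List.length_append, List.length_singleton] at hj
    exact hj
  have hy : y = cs.wordProd ((ω' ++ [i]).eraseIdx j) := by
    have heq := cs.wordProd_mul_getD_rightInvSeq (ω' ++ [i]) j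
    rw [List.getD_eq_getElem _ 1 hj, hgt, hπ] at heq
    rw [← heq, hz, mul_assoc, ht.mul_self, mul_one]
  rcases lt_or_ge j ω'.length with hlt | hge
  · exfalso
    have he : (ω' ++ [i]).eraseIdx j = ω'.eraseIdx j ++ [i] :=
      List.eraseIdx_append_of_lt_length hlt [i]
    have hysi : y * cs.simple i = cs.wordProd (ω'.eraseIdx j) := by
      rw [hy, he, cs.wordProd_append, cs.wordProd_singleton,
        cs.simple_mul_simple_cancel_right]
    have hle : cs.length (y * cs.simple i) ≤ (ω'.eraseIdx j).length := by
      rw [hysi]; exact cs.length_wordProd_le _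
    have hlen2 : (ω'.eraseIdx j).length = ω'.length - 1 := by
      rw [List.length_eraseIdx]
      simp [hlt]
    have hylen : cs.length y ≤ cs.length z := by omega
    omega
  · have hj_eq : j = ω'.length := by omega
    have he : (ω' ++ [i]).eraseIdx j = ω' := by
      rw [hj_eq]
      rw [List.eraseIdx_append_of_length_le (le_refl _)]
      simp
    have : y = z * cs.simple i := by rw [hy, he, hw']
    have h4 : t * cs.simple i = 1 := by
      rw [hz, mul_assoc] at this
      have h5 : y * 1 = y * (t * cs.simple i) := by rw [mul_one, ← this]
      exact (mul_left_cancel h5).symm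
    calc t = t * (cs.simple i * cs.simple i) := by rw [cs.simple_mul_simple_self, mul_one]
    _ = (t * cs.simple i) * cs.simple i := by rw [mul_assoc]
    _ = cs.simple i := by rw [h4, one_mul]

end BruhatNoZ

open BruhatNoZ in
theorem no_z_of_ascent (cs : CoxeterSystem M W) (i : B) (y w : W)
    (hy : cs.length y < cs.length (y * cs.simple i))
    (hw : BruhatLE cs w (y * cs.simple i)) (hwy : w ≠ y) (hws : w ≠ y * cs.simple i) :
    ¬ ∃ z : W, BruhatLE cs y z ∧ BruhatLE cs (z * cs.simple i) w := by
  rintro ⟨z, hyz, hzw⟩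
  have hys : cs.length (y * cs.simple i) = cs.length y + 1 := by
    rcases cs.length_mul_simple y i with hc | hc
    · exact hc
    · omega
  have hw_le : cs.length w ≤ cs.length (y * cs.simple i) := length_le_of_le hw
  have hw_lt : cs.length w < cs.length (y * cs.simple i) := by
    rcases lt_or_eq_of_le hw_le with h | h
    · exact h
    · exact absurd (eq_of_le_of_length_ge hw (le_of_eq h.symm)) hws
  have hwlen : cs.length w ≤ cs.length y := by omega
  have hzs_le : cs.length (z * cs.simple i) ≤ cs.length w := length_le_of_le hzw
  have hyz_len : cs.length y ≤ cs.length z := length_le_of_le hyz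
  have hzs : cs.length (z * cs.simple i) + 1 = cs.length z := by
    rcases cs.length_mul_simple z i with hc | hc
    · omega
    · exact hc
  rcases Nat.lt_or_ge (cs.length z) (cs.length y + 1) with hcase | hcase
  · have hz_eq : y = z := eq_of_le_of_length_ge hyz (by omega)
    have h5 : cs.length (z * cs.simple i) = cs.length (y * cs.simple i) := by rw [← hz_eq]
    omega
  · have hz_len : cs.length z = cs.length y + 1 := by omega
    have hw_eq : z * cs.simple i = w := eq_of_le_of_length_ge hzw (by omega)
    obtain ⟨t, ht, hzt⟩ := step_of_le_of_length hyz (by omega)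
    have ht_eq : t = cs.simple i := by
      apply step_lifting cs i ht
      · rw [← hzt]; omega
      · rw [← hzt]; omega
      · exact hy
    apply hwy
    rw [← hw_eq, hzt, ht_eq]
    exact cs.simple_mul_simple_cancel_right i
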